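/- Let G be a Cayley graph Cay(Γ, A) on a finite group Γ with symmetric generating set A of size d, and suppose S ⊆ Γ is a clique in G with |S| ≥ 2. Then there exists a nonidentity element t ∈ Γ such that |(tS) ∩ S| ≥ |S|(|S|−1)/d. -/

import Mathlib

/-!
Each ordered pair `(s, s')` of distinct clique elements has quotient `s s'⁻¹ ∈ A`, and the pairs
in `S × S` with quotient `t` correspond to the points of `tS ∩ S` via `(s, s') ↦ s`. So the
`|S|(|S| - 1)` pairs are spread over the `d` sets `tS ∩ S` with `t ∈ A`, and one of them receives
at least the average; that `t` is not `1` because `1 ∉ A`.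
-/

open Pointwise

namespace Finset

variable {G : Type*} [Group G] [DecidableEq G]

lemma card_smul_inter_eq_card_filter_mul_inv (S : Finset G) (t : G) :
    #(t • S ∩ S) = #{p ∈ S ×ˢ S | p.1 * p.2⁻¹ = t} := by
  refine card_nbij' (fun x ↦ (x, t⁻¹ * x)) Prod.fst ?_ ?_ ?_ ?_
  · intro x hx
    obtain ⟨hxt, hxS⟩ := mem_inter.mp hx
    obtain ⟨y, hy, rfl⟩ := mem_smul_finset.mp hxt
    simpa [hy, mul_assoc] using hxS
  · intro p hp
    obtain ⟨⟨h1, h2⟩, hpt⟩ := by simpa using hp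
    refine mem_inter.mpr ⟨mem_smul_finset.mpr ⟨p.2, h2, ?_⟩, h1⟩
    simp [← hpt, mul_assoc]
  · exact fun _ _ ↦ rfl
  · intro p hp
    obtain ⟨-, hpt⟩ := by simpa using hp
    simp [← hpt, mul_assoc]

lemma card_offDiag_le_sum_card_smul_inter {S A : Finset G}
    (hA : ∀ s ∈ S, ∀ s' ∈ S, s ≠ s' → s * s'⁻¹ ∈ A) :
    #S.offDiag ≤ ∑ t ∈ A, #(t • S ∩ S) := by
  have hmaps : ∀ p ∈ S.offDiag, p.1 * p.2⁻¹ ∈ A := fun p hp ↦ by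
    obtain ⟨h1, h2, hne⟩ := mem_offDiag.mp hp
    exact hA _ h1 _ h2 hne
  rw [card_eq_sum_card_fiberwise hmaps]
  refine sum_le_sum fun t _ ↦ ?_
  rw [card_smul_inter_eq_card_filter_mul_inv]
  exact card_le_card (filter_subset_filter _ fun p hp ↦ by
    obtain ⟨h1, h2, -⟩ := mem_offDiag.mp hp
    exact mem_product.mpr ⟨h1, h2⟩)

lemma exists_mem_card_mul_pred_div_le_card_smul_inter {S A : Finset G}
    (hA : ∀ s ∈ S, ∀ s' ∈ S, s ≠ s' → s * s'⁻¹ ∈ A) (hS : S.Nontrivial) :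
    ∃ t ∈ A, (#S : ℝ) * (#S - 1) / #A ≤ #(t • S ∩ S) := by
  obtain ⟨s, hs, s', hs', hne⟩ := hS
  have hAne : A.Nonempty := ⟨_, hA s hs s' hs' hne⟩
  have hoffDiag : (#S.offDiag : ℝ) = #S * (#S - 1) := by
    rw [offDiag_card, Nat.cast_sub (Nat.le_mul_self _)]
    push_cast
    ring
  refine exists_le_of_sum_le hAne ?_
  calc ∑ _ ∈ A, (#S : ℝ) * (#S - 1) / #A
      = #S * (#S - 1) := by
        rw [sum_const, nsmul_eq_mul, mul_div_cancel₀ _ (by exact_mod_cast hAne.card_pos.ne')]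
    _ = #S.offDiag := hoffDiag.symm
    _ ≤ ∑ t ∈ A, (#(t • S ∩ S) : ℝ) := by
        exact_mod_cast card_offDiag_le_sum_card_smul_inter hA

end Finset

theorem cayley_clique_translate {Γ : Type*} [Group Γ] [DecidableEq Γ]
    (A : Finset Γ) (d : ℕ) (hd : A.card = d)
    (hone : (1 : Γ) ∉ A)
    (S : Finset Γ) (hS : ∀ s ∈ S, ∀ s' ∈ S, s ≠ s' → s * s'⁻¹ ∈ A)
    (hS2 : 2 ≤ S.card) :
    ∃ t : Γ, t ≠ 1 ∧ (S.card : ℝ) * ((S.card : ℝ) - 1) / d ≤ ((t • S ∩ S).card : ℝ) := by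
  obtain ⟨t, htA, ht⟩ := Finset.exists_mem_card_mul_pred_div_le_card_smul_inter hS
    (Finset.one_lt_card_iff_nontrivial.mp hS2)
  exact ⟨t, ne_of_mem_of_not_mem htA hone, hd ▸ ht⟩
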